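/- arXiv:2407.01140 — 3 statements merged into one kernel-verified Lean document; each statement's English description precedes it below -/
import Mathlib

section
/- Let X be a topological space and A ⊆ X a subspace. Let U be an open subset of X such that U ∩ A is path-connected and, for every x ∈ U ∩ A, the natural map from im(π₁(U∩A, x) → π₁(X, x)) into im(π₁(U, x) → π₁(X, x)) is surjective. Then for every path γ : [0,1] → U with both endpoints in U ∩ A, there exists a path λ : [0,1] → U ∩ A with the same endpoints such that λ is homotopic to γ in X relative to the endpoints. -/
/-!
Join `b` back to `a` inside `U ∩ A` by a path `δ`. The loop `γ * δ` at `a` lies in `U`, so it is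
homotopic in `X` to a loop `λ₀` in `U ∩ A`; then `γ ≃ (γ * δ) * δ⁻¹ ≃ λ₀ * δ⁻¹`, a path in `U ∩ A`.
-/

namespace Path

variable {X : Type*} [TopologicalSpace X] {a b c : X}

theorem trans_mem {S : Set X} {γ : Path a b} {δ : Path b c} (hγ : ∀ t, γ t ∈ S)
    (hδ : ∀ t, δ t ∈ S) (t : unitInterval) : γ.trans δ t ∈ S := by
  have hrange : Set.range (γ.trans δ) ⊆ S := by
    rw [trans_range]
    exact Set.union_subset (Set.range_subset_iff.2 hγ) (Set.range_subset_iff.2 hδ)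
  exact hrange ⟨t, rfl⟩

theorem Homotopic.trans_trans_symm (γ : Path a b) (δ : Path b c) :
    ((γ.trans δ).trans δ.symm).Homotopic γ :=
  ((trans_assoc γ δ δ.symm).trans ((refl γ).hcomp (trans_symm δ))).trans (trans_refl γ)

end Path

theorem stmt0_general {X : Type*} [TopologicalSpace X] (A U : Set X)
    (hRC1 : ∀ x ∈ U ∩ A, ∀ y ∈ U ∩ A, JoinedIn (U ∩ A) x y)
    (hRC2 : ∀ x ∈ U ∩ A, ∀ γ : Path x x, (∀ t, γ t ∈ U) →
      ∃ lam : Path x x, (∀ t, lam t ∈ U ∩ A) ∧ Path.Homotopic γ lam) :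
    ∀ (a b : X), a ∈ U ∩ A → b ∈ U ∩ A → ∀ γ : Path a b, (∀ t, γ t ∈ U) →
      ∃ lam : Path a b, (∀ t, lam t ∈ U ∩ A) ∧ Path.Homotopic γ lam := by
  intro a b ha hb γ hγ
  obtain ⟨δ, hδ⟩ := hRC1 b hb a ha
  obtain ⟨lam₀, hlam₀, hγδ⟩ := hRC2 a ha (γ.trans δ) (Path.trans_mem hγ fun t => (hδ t).1)
  refine ⟨lam₀.trans δ.symm, Path.trans_mem hlam₀ fun t => hδ _, ?_⟩
  exact (Path.Homotopic.trans_trans_symm γ δ).symm.trans (hγδ.hcomp (.refl δ.symm))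

/-- If `U ∩ A` is path-connected (empty set allowed) and for every basepoint in `U ∩ A`
the image of `π₁(U ∩ A)` in `π₁(X)` surjects onto the image of `π₁(U)` (phrased via loops),
then every path in `U` with endpoints in `U ∩ A` is homotopic in `X` rel endpoints to a
path in `U ∩ A`. -/
theorem stmt0 {X : Type*} [TopologicalSpace X] (A U : Set X) (hU : IsOpen U)
    (hRC1 : ∀ x ∈ U ∩ A, ∀ y ∈ U ∩ A, JoinedIn (U ∩ A) x y)
    (hRC2 : ∀ x ∈ U ∩ A, ∀ γ : Path x x, (∀ t, γ t ∈ U) →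
      ∃ lam : Path x x, (∀ t, lam t ∈ U ∩ A) ∧ Path.Homotopic γ lam) :
    ∀ (a b : X), a ∈ U ∩ A → b ∈ U ∩ A → ∀ γ : Path a b, (∀ t, γ t ∈ U) →
      ∃ lam : Path a b, (∀ t, lam t ∈ U ∩ A) ∧ Path.Homotopic γ lam :=
  stmt0_general A U hRC1 hRC2
end

section
/- Let G be a group acting on a set S (the algebraic simplices of a multicomplex), let L ⊆ S be a subset, and let H ≤ G be a subgroup with H · L ⊆ L. Suppose the action of G has orbits in L induced by H, i.e. for every σ ∈ L and g ∈ G with g·σ ∈ L there exists h ∈ H with h·σ = g·σ. Then the restriction map from the space of G-invariant bounded real-valued functions on S to the space of H-invariant bounded real-valued functions on L is surjective. -/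
/-!
Extend `z` to `S` by sending `σ` to the value of `z` at some point of `orbit G σ ∩ L`, and to `0`
when that set is empty. The extension is `G`-invariant because it only depends on the orbit, and
it agrees with `z` on `L` because the orbit hypothesis makes `z` constant on `orbit G σ ∩ L`: two
points of `L` in one `G`-orbit are already related by an element of `H`.
-/

namespace MulAction

variable {G S β : Type*} [Group G] [MulAction G S]

variable (G) in
noncomputable def extendAlongOrbits [Zero β] (L : Set S) (z : S → β) (σ : S) : β :=
  open Classical in
  if h : (orbit G σ ∩ L).Nonempty then z h.some else 0

variable (G) in
theorem extendAlongOrbits_smul [Zero β] (L : Set S) (z : S → β) (g : G) (σ : S) :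
    extendAlongOrbits G L z (g • σ) = extendAlongOrbits G L z σ := by
  rw [extendAlongOrbits, extendAlongOrbits, orbit_smul]

theorem abs_extendAlongOrbits_le {L : Set S} {z : S → ℝ} {C : ℝ} (hC : ∀ σ, |z σ| ≤ C) (σ : S) :
    |extendAlongOrbits G L z σ| ≤ max C 0 := by
  unfold extendAlongOrbits
  split_ifs
  · exact (hC _).trans (le_max_left _ _)
  · simp

theorem extendAlongOrbits_of_mem [Zero β] {L : Set S} {z : S → β}
    (hz : ∀ σ ∈ L, ∀ τ ∈ L, τ ∈ orbit G σ → z τ = z σ) {σ : S} (hσ : σ ∈ L) :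
    extendAlongOrbits G L z σ = z σ := by
  have hne : (orbit G σ ∩ L).Nonempty := ⟨σ, mem_orbit_self σ, hσ⟩
  rw [extendAlongOrbits, dif_pos hne]
  exact hz σ hσ _ hne.some_mem.2 hne.some_mem.1

theorem eq_of_mem_orbit_of_orbits_induced {L : Set S} {H : Subgroup G} {z : S → β}
    (horb : ∀ σ ∈ L, ∀ g : G, g • σ ∈ L → ∃ h : H, (h : G) • σ = g • σ)
    (hz : ∀ h : H, ∀ σ ∈ L, z ((h : G) • σ) = z σ) :
    ∀ σ ∈ L, ∀ τ ∈ L, τ ∈ orbit G σ → z τ = z σ := by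
  rintro σ hσ _ hτ ⟨g, rfl⟩
  dsimp only at hτ ⊢
  obtain ⟨h, hh⟩ := horb σ hσ g hτ
  rw [← hh]
  exact hz h σ hσ

end MulAction

open MulAction

theorem stmt5_general {S : Type*} {G : Type*} [Group G] [MulAction G S]
    (L : Set S) (H : Subgroup G)
    (horb : ∀ σ ∈ L, ∀ g : G, g • σ ∈ L → ∃ h : H, (h : G) • σ = g • σ) :
    ∀ z : S → ℝ, (∃ C : ℝ, ∀ σ, |z σ| ≤ C) →
      (∀ h : H, ∀ σ ∈ L, z ((h : G) • σ) = z σ) →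
      ∃ z' : S → ℝ, (∃ C : ℝ, ∀ σ, |z' σ| ≤ C) ∧
        (∀ g : G, ∀ σ : S, z' (g • σ) = z' σ) ∧
        (∀ σ ∈ L, z' σ = z σ) := by
  rintro z ⟨C, hC⟩ hz
  exact ⟨extendAlongOrbits G L z, ⟨max C 0, abs_extendAlongOrbits_le hC⟩,
    extendAlongOrbits_smul G L z,
    fun _ => extendAlongOrbits_of_mem (eq_of_mem_orbit_of_orbits_induced horb hz)⟩

/-- If the action of `G` on `S` has orbits in `L` induced by the subgroup `H` (which
preserves `L`), then every `H`-invariant bounded real-valued function on `L` extends to a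
`G`-invariant bounded real-valued function on `S`: the restriction map
`C_b(S)^G → C_b(L)^H` is surjective. -/
theorem stmt5 {S : Type*} {G : Type*} [Group G] [MulAction G S]
    (L : Set S) (H : Subgroup G)
    (hHL : ∀ h : H, ∀ σ ∈ L, (h : G) • σ ∈ L)
    (horb : ∀ σ ∈ L, ∀ g : G, g • σ ∈ L → ∃ h : H, (h : G) • σ = g • σ) :
    ∀ z : S → ℝ, (∃ C : ℝ, ∀ σ, |z σ| ≤ C) →
      (∀ h : H, ∀ σ ∈ L, z ((h : G) • σ) = z σ) →
      ∃ z' : S → ℝ, (∃ C : ℝ, ∀ σ, |z' σ| ≤ C) ∧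
        (∀ g : G, ∀ σ : S, z' (g • σ) = z' σ) ∧
        (∀ σ ∈ L, z' σ = z σ) :=
  stmt5_general L H horb
end

section
/- Let G be a group acting on a set S and H ≤ G a subgroup preserving L ⊆ S such that G-orbits in L are induced by H. Then the sequence 0 → C_b(S, L)^G → C_b(S)^G → C_b(L)^H → 0 is exact, where C_b(S, L)^G denotes G-invariant bounded functions on S vanishing on L, and the maps are inclusion and restriction. -/
/-!
Exactness in the middle is immediate. For surjectivity, the hypotheses on `H` make an
`H`-invariant function `z` on `L` constant on the traces of `G`-orbits on `L`, so `z` descends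
to the orbits meeting `L`; extending by `0` on the other orbits gives a `G`-invariant function
on `S` taking no values besides those of `z` and `0`, hence bounded.
-/

namespace MulAction

variable {G S : Type*} [Group G] [MulAction G S]

theorem factorsThrough_orbitRel_of_forall_subgroup_smul {L : Set S} {H : Subgroup G}
    (horb : ∀ σ ∈ L, ∀ g : G, g • σ ∈ L → ∃ h : H, (h : G) • σ = g • σ)
    {β : Type*} {z : L → β}
    (hz : ∀ (h : H) (σ : L) (hσ : (h : G) • (σ : S) ∈ L), z ⟨(h : G) • (σ : S), hσ⟩ = z σ) :
    Function.FactorsThrough z (fun τ : L ↦ Quotient.mk (orbitRel G S) (τ : S)) := by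
  rintro τ ⟨τ', hτ'⟩ hττ'
  obtain ⟨g, hg⟩ : (τ : S) ∈ orbit G τ' := Quotient.exact hττ'
  obtain ⟨h, hh⟩ := horb τ' hτ' g (by simpa only [hg] using τ.2)
  rw [← hz h ⟨τ', hτ'⟩ (hh.trans hg ▸ τ.2)]
  exact congrArg z (Subtype.ext (hh.trans hg).symm)

theorem exists_smul_invariant_extend {L : Set S} {β : Type*} (z : L → β) (e : β)
    (hz : Function.FactorsThrough z (fun τ : L ↦ Quotient.mk (orbitRel G S) (τ : S))) :
    ∃ f : S → β, (∀ (g : G) (σ : S), f (g • σ) = f σ) ∧ (∀ σ : L, f σ = z σ) ∧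
      ∀ σ, f σ = e ∨ f σ ∈ Set.range z := by
  classical
  let π : S → orbitRel.Quotient G S := Quotient.mk (orbitRel G S)
  refine ⟨Function.extend (fun τ : L ↦ π τ) z (fun _ ↦ e) ∘ π, fun g σ ↦ ?_,
    fun σ ↦ hz.extend_apply _ σ, fun σ ↦ ?_⟩
  · exact congrArg (Function.extend _ z _) (Quotient.sound (mem_orbit σ g))
  · by_cases hσ : ∃ τ : L, π τ = π σ
    · obtain ⟨τ, hτ⟩ := hσ
      exact Or.inr ⟨τ, by rw [Function.comp_apply, ← hτ, hz.extend_apply]⟩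
    · exact Or.inl (Function.extend_apply' _ _ _ hσ)

theorem exists_bounded_smul_invariant_extend {L : Set S} (z : L → ℝ) {C : ℝ}
    (hC : ∀ σ : L, |z σ| ≤ C)
    (hz : Function.FactorsThrough z (fun τ : L ↦ Quotient.mk (orbitRel G S) (τ : S))) :
    ∃ f : S → ℝ, (∃ C : ℝ, ∀ σ, |f σ| ≤ C) ∧
      (∀ (g : G) (σ : S), f (g • σ) = f σ) ∧ ∀ σ : L, f σ = z σ := by
  obtain ⟨f, hinv, hext, hval⟩ := exists_smul_invariant_extend z 0 hz
  refine ⟨f, ⟨max C 0, fun σ ↦ ?_⟩, hinv, hext⟩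
  rcases hval σ with h0 | ⟨τ, hτ⟩
  · simp [h0]
  · exact hτ ▸ le_max_of_le_left (hC τ)

end MulAction

/-- Exactness of `0 → C_b(S, L)^G → C_b(S)^G → C_b(L)^H → 0` when `G`-orbits in `L` are
induced by `H`: a `G`-invariant bounded function lies in `C_b(S, L)^G` iff it restricts to
`0` on `L` (exactness at the middle, with injectivity of the inclusion being evident), and
every `H`-invariant bounded function on `L` is the restriction of a `G`-invariant bounded
function on `S` (exactness at the right). -/
theorem stmt17 {S : Type*} {G : Type*} [Group G] [MulAction G S]
    (L : Set S) (H : Subgroup G)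
    (hHL : ∀ (h : H) (σ : L), (h : G) • (σ : S) ∈ L)
    (horb : ∀ σ ∈ L, ∀ g : G, g • σ ∈ L → ∃ h : H, (h : G) • σ = g • σ) :
    -- exactness at the middle term
    (∀ f : S → ℝ, (∃ C : ℝ, ∀ σ, |f σ| ≤ C) → (∀ (g : G) (σ : S), f (g • σ) = f σ) →
      ((∀ σ : L, f σ = 0) ↔
        f ∈ {g : S → ℝ | (∃ C : ℝ, ∀ σ, |g σ| ≤ C) ∧
          (∀ (g' : G) (σ : S), g (g' • σ) = g σ) ∧ ∀ σ ∈ L, g σ = 0})) ∧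
    -- exactness at the right: surjectivity of the restriction map
    (∀ z : L → ℝ, (∃ C : ℝ, ∀ σ : L, |z σ| ≤ C) →
      (∀ (h : H) (σ : L), z ⟨(h : G) • (σ : S), hHL h σ⟩ = z σ) →
      ∃ f : S → ℝ, (∃ C : ℝ, ∀ σ, |f σ| ≤ C) ∧
        (∀ (g : G) (σ : S), f (g • σ) = f σ) ∧ ∀ σ : L, f σ = z σ) := by
  refine ⟨fun f hb hinv ↦ ⟨fun h0 ↦ ⟨hb, hinv, fun σ hσ ↦ h0 ⟨σ, hσ⟩⟩,
    fun ⟨_, _, h0⟩ σ ↦ h0 σ σ.2⟩, fun z ⟨C, hC⟩ hzinv ↦ ?_⟩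
  exact MulAction.exists_bounded_smul_invariant_extend z hC
    (MulAction.factorsThrough_orbitRel_of_forall_subgroup_smul horb fun h σ _ ↦ hzinv h σ)
end
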